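/- Let P be a finite set of primes and suppose Π_{p ∈ P} p ≤ H^K for some real H ≥ e and constant K ≥ 1. Then Σ_{p ∈ P} (log p)/p ≤ log log H + O_K(1), i.e., there is a constant C depending only on K with Σ_{p ∈ P} (log p)/p ≤ log log H + C. -/

import Mathlib

/-!
Split `P` at `x = K log H`. Since `∑_{p ∈ P} log p ≤ log ∏ p ≤ x`, the primes above `x` contribute
at most `(∑ log p) / x ≤ 1`. The primes up to `x` contribute at most Mertens' sum
`∑_{p ≤ x} log p / p ≤ log x + log 4`, which follows from comparing `log n! ≤ n log n` with
Legendre's formula `v_p(n!) ≥ ⌊n/p⌋` and bounding the rounding error by Chebyshev's `θ(n) ≤ n log 4`.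
-/

open Finset Real

theorem Nat.div_le_factorization_factorial {p : ℕ} (hp : p.Prime) (n : ℕ) :
    n / p ≤ n.factorial.factorization p := by
  rcases n.eq_zero_or_pos with rfl | hn
  · simp
  rw [Nat.factorization_factorial hp (Nat.lt_succ_of_le (Nat.log_le_self p n))]
  simpa using single_le_sum (f := fun i => n / p ^ i) (fun _ _ => Nat.zero_le _)
    (mem_Ico.mpr ⟨le_rfl, Nat.succ_lt_succ hn⟩)

theorem sum_primesLE_div_mul_log_le (n : ℕ) :
    ∑ p ∈ n.primesLE, ((n / p : ℕ) : ℝ) * log p ≤ n * log n := by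
  have hsupp : n.factorial.factorization.support ⊆ n.primesLE := fun p hp => by
    obtain ⟨hpp, hdvd, -⟩ := Nat.mem_primeFactors.mp (Nat.support_factorization _ ▸ hp)
    exact Nat.mem_primesLE.mpr ⟨(hpp.dvd_factorial).mp hdvd, hpp⟩
  calc ∑ p ∈ n.primesLE, ((n / p : ℕ) : ℝ) * log p
      ≤ ∑ p ∈ n.primesLE, (n.factorial.factorization p : ℝ) * log p := by
        gcongr with p hp
        exact Nat.div_le_factorization_factorial (Nat.mem_primesLE.mp hp).2 n
    _ = log (n.factorial : ℕ) := by
        rw [log_nat_eq_sum_factorization, Finsupp.sum_of_support_subset _ hsupp]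
        simp
    _ ≤ log ((n : ℝ) ^ n) := by
        gcongr
        exact_mod_cast n.factorial_le_pow
    _ = n * log n := log_pow n n

theorem sum_primesLE_log_div_le (n : ℕ) :
    ∑ p ∈ n.primesLE, log p / p ≤ log n + log 4 := by
  rcases n.eq_zero_or_pos with rfl | hn
  · simpa using log_nonneg (by norm_num : (1 : ℝ) ≤ 4)
  have hn' : (0 : ℝ) < n := by exact_mod_cast hn
  have hterm : ∀ p ∈ n.primesLE, n * (log p / p) ≤ ((n / p : ℕ) : ℝ) * log p + log p := by
    intro p hp
    have hround : (n : ℝ) / p ≤ ((n / p : ℕ) : ℝ) + 1 := by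
      rw [← Nat.floor_div_eq_div (K := ℝ)]
      exact (Nat.lt_floor_add_one _).le
    calc n * (log p / p) = (n : ℝ) / p * log p := by ring
      _ ≤ (((n / p : ℕ) : ℝ) + 1) * log p := by gcongr
      _ = _ := by ring
  refine le_of_mul_le_mul_left ?_ hn'
  calc (n : ℝ) * ∑ p ∈ n.primesLE, log p / p
      ≤ ∑ p ∈ n.primesLE, ((n / p : ℕ) : ℝ) * log p + ∑ p ∈ n.primesLE, log p := by
        rw [mul_sum, ← sum_add_distrib]
        exact sum_le_sum hterm
    _ ≤ n * log n + log 4 * n := by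
        rw [← Chebyshev.theta_eq_sum_primesLE_log]
        exact add_le_add (sum_primesLE_div_mul_log_le n) (Chebyshev.theta_le_log4_mul_x hn'.le)
    _ = n * (log n + log 4) := by ring

theorem sum_primesLE_floor_log_div_le {x : ℝ} (hx : 1 ≤ x) :
    ∑ p ∈ ⌊x⌋₊.primesLE, log p / p ≤ log x + log 4 := by
  have hfloor : (0 : ℝ) < ⌊x⌋₊ := by exact_mod_cast Nat.floor_pos.mpr hx
  have := log_le_log hfloor (Nat.floor_le (by linarith))
  linarith [sum_primesLE_log_div_le ⌊x⌋₊]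

theorem sum_filter_lt_log_div_le (S : Finset ℕ) {x : ℝ} (hx : 0 < x) :
    ∑ p ∈ S with x < (p : ℕ), log p / p ≤ (∑ p ∈ S, log p) / x := by
  calc ∑ p ∈ S with x < (p : ℕ), log p / p
      ≤ ∑ p ∈ S with x < (p : ℕ), log p / x := by
        refine sum_le_sum fun p hp => ?_
        exact div_le_div_of_nonneg_left (log_natCast_nonneg p) hx (mem_filter.mp hp).2.le
    _ ≤ (∑ p ∈ S, log p) / x := by
        rw [← sum_div]
        gcongr
        exact filter_subset _ S

theorem stmt_13 (K : ℝ) (hK : 1 ≤ K) :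
    ∃ C : ℝ, ∀ P : Finset ℕ, (∀ p ∈ P, p.Prime) →
      ∀ H : ℝ, Real.exp 1 ≤ H → (∏ p ∈ P, (p : ℝ)) ≤ H ^ K →
        ∑ p ∈ P, Real.log p / p ≤ Real.log (Real.log H) + C := by
  refine ⟨log K + log 4 + 1, fun P hP H hH hprod => ?_⟩
  have hlogH : 1 ≤ log H := by simpa using log_le_log (exp_pos 1) hH
  set x := K * log H
  have hx : 1 ≤ x := one_le_mul_of_one_le_of_one_le hK hlogH
  have hsum : ∑ p ∈ P, log p ≤ x := by
    have hpos : ∀ p ∈ P, (p : ℝ) ≠ 0 := fun p hp => by exact_mod_cast (hP p hp).ne_zero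
    simpa [log_prod hpos, log_rpow ((exp_pos 1).trans_le hH)] using
      log_le_log (prod_pos fun p hp => (hpos p hp).symm.lt_of_le (Nat.cast_nonneg p)) hprod
  have hsmall : ∑ p ∈ P with ¬ x < (p : ℕ), log p / p ≤ log x + log 4 := by
    refine le_trans (sum_le_sum_of_subset_of_nonneg ?_ fun p _ _ => by positivity)
      (sum_primesLE_floor_log_div_le hx)
    intro p hp
    obtain ⟨hpP, hpx⟩ := mem_filter.mp hp
    exact Nat.mem_primesLE.mpr ⟨Nat.le_floor (not_lt.mp hpx), hP p hpP⟩
  have hlarge : ∑ p ∈ P with x < (p : ℕ), log p / p ≤ 1 :=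
    (sum_filter_lt_log_div_le P (by linarith)).trans ((div_le_one (by linarith)).mpr hsum)
  have hlogx : log x = log K + log (log H) := log_mul (by linarith) (by linarith)
  rw [← sum_filter_not_add_sum_filter P (fun p : ℕ => x < p)]
  linarith
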